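/- For all natural numbers m, n: H(m+1, n) · (|1⟩ ⊗ I_{2^m}) = H(m,n), and H(m+1, n) · (|0⟩ ⊗ I_{2^m}) equals the all-ones (m,n)-matrix; that is, an H-box absorbs a |1⟩ input and becomes fully disconnected (all-ones) on a |0⟩ input (the derived state-copy rules for H-boxes, Lemma 3.3). -/

import Mathlib

/-- An `(m,n)`-qubit map: a complex matrix with rows indexed by output
bit strings of length `n` and columns indexed by input bit strings of length `m`. -/
abbrev QMap (m n : ℕ) : Type := Matrix (Fin n → Bool) (Fin m → Bool) ℂ

/-- Canonical identification of a pair of bit strings with a single bit string. -/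
def bitEquiv (a b : ℕ) : ((Fin a → Bool) × (Fin b → Bool)) ≃ (Fin (a + b) → Bool) :=
  (Equiv.sumArrowEquivProdArrow (Fin a) (Fin b) Bool).symm.trans
    (Equiv.arrowCongr finSumFinEquiv (Equiv.refl Bool))

/-- Kronecker (tensor) product of qubit maps, under the canonical identification. -/
def tens {m n m' n' : ℕ} (A : QMap m n) (B : QMap m' n') : QMap (m + m') (n + n') :=
  Matrix.reindex (bitEquiv n n') (bitEquiv m m') (Matrix.kroneckerMap (· * ·) A B)

/-- Transport a qubit map along equalities of the numbers of inputs and outputs. -/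
def castQ {m m' n n' : ℕ} (hm : m = m') (hn : n = n') (A : QMap m n) : QMap m' n' :=
  Matrix.reindex (Equiv.arrowCongr (finCongr hn) (Equiv.refl Bool))
    (Equiv.arrowCongr (finCongr hm) (Equiv.refl Bool)) A

/-- The Z-spider `Z(m,n)`: entry 1 iff all `m+n` bits are equal (all 0 or all 1). -/
def Zsp (m n : ℕ) : QMap m n := fun j i =>
  if ((∀ k, i k = false) ∧ (∀ k, j k = false)) ∨ ((∀ k, i k = true) ∧ (∀ k, j k = true))
  then 1 else 0

/-- The X-spider `X(m,n)`: entry 1 iff the sum mod 2 of all `m+n` bits is 0. -/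
def Xsp (m n : ℕ) : QMap m n := fun j i =>
  if ((∑ k, (if i k then (1 : ZMod 2) else 0)) + ∑ k, (if j k then (1 : ZMod 2) else 0)) = 0
  then 1 else 0

/-- The (phase-free) H-box `H(m,n)`: entry −1 iff all `m+n` bits are 1, else 1. -/
def Hbox (m n : ℕ) : QMap m n := fun j i =>
  if (∀ k, i k = true) ∧ (∀ k, j k = true) then -1 else 1

/-- The Hadamard gate `(1/√2)·[[1,1],[1,−1]]`. -/
noncomputable def Had : QMap 1 1 := fun j i =>
  (Real.sqrt 2 : ℂ)⁻¹ * (if i 0 = true ∧ j 0 = true then -1 else 1)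

/-- The NOT gate `[[0,1],[1,0]]`. -/
def Xg : QMap 1 1 := fun j i => if j 0 = i 0 then 0 else 1

/-- The Z gate `diag(1,−1)`. -/
def Zg : QMap 1 1 := fun j i => if j 0 = i 0 then (if i 0 = true then -1 else 1) else 0

/-- The triangle `[[1,1],[0,1]]` (row `j`, column `i`; the only zero entry is at `j=1, i=0`). -/
def Tri : QMap 1 1 := fun j i => if j 0 = true ∧ i 0 = false then 0 else 1

/-- The AND gate: `|x,y⟩ ↦ |x ∧ y⟩`. -/
def ANDg : QMap 2 1 := fun j i => if j 0 = (i 0 && i 1) then 1 else 0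

/-- The swap of two qubits. -/
def swapQ : QMap 2 2 := fun j i => if j 0 = i 1 ∧ j 1 = i 0 then 1 else 0

/-- The cup `|00⟩ + |11⟩`. -/
def cupQ : QMap 0 2 := fun j _ => if j 0 = j 1 then 1 else 0

/-- The cap `⟨00| + ⟨11|`. -/
def capQ : QMap 2 0 := fun _ i => if i 0 = i 1 then 1 else 0

/-- The scalar `1/√2` as a `(0,0)`-map. -/
noncomputable def starQ : QMap 0 0 := fun _ _ => (Real.sqrt 2 : ℂ)⁻¹

/-- `k`-fold tensor power of a qubit map. -/
def tpow {a b : ℕ} (A : QMap a b) : (k : ℕ) → QMap (a * k) (b * k)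
  | 0 => (1 : QMap 0 0)
  | k + 1 => tens (tpow A k) A

/-- The wire in block `s` (of `b` blocks), at position `t` within the block (of size `a`). -/
def wp {a b : ℕ} (s : Fin b) (t : Fin a) : Fin (a * b) :=
  ⟨a * s.val + t.val, by
    have ht := t.isLt
    have hs := s.isLt
    have h1 : a * s.val + t.val < a * (s.val + 1) := by rw [Nat.mul_succ]; omega
    exact lt_of_lt_of_le h1 (Nat.mul_le_mul (le_refl a) hs)⟩

/-- The permutation `σ_{m,n}` regrouping `m` blocks of `n` wires into `n` blocks of `m` wires:
it reindexes bit strings `g : Fin m × Fin n → Bool` to `(s,t) ↦ g(t,s)`. -/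
def sigmaQ (m n : ℕ) : QMap (n * m) (m * n) := fun j i =>
  if ∀ (s : Fin m) (t : Fin n), j (wp t s) = i (wp s t) then 1 else 0

/-- The computational basis state `|0⟩` as a `(0,1)`-map. -/
def ket0 : QMap 0 1 := fun j _ => if j 0 = false then 1 else 0

/-- The computational basis state `|1⟩` as a `(0,1)`-map. -/
def ket1 : QMap 0 1 := fun j _ => if j 0 = true then 1 else 0

/-! Plugging the basis state `|b⟩` into the first input of a map `M` evaluates `M` on the input
strings whose first bit is `b`: `|b⟩ ⊗ I` is the matrix of `i ↦ Fin.cons b i`. An H-box with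
first input bit `1` is the smaller H-box, and one with first input bit `0` has no entry `-1`. -/

theorem castQ_apply {m m' n n' : ℕ} (hm : m = m') (hn : n = n') (A : QMap m n)
    (j : Fin n' → Bool) (i : Fin m' → Bool) :
    castQ hm hn A j i = A (fun k => j (Fin.cast hn k)) (fun k => i (Fin.cast hm k)) := rfl

theorem tens_apply {m n m' n' : ℕ} (A : QMap m n) (B : QMap m' n')
    (j : Fin (n + n') → Bool) (i : Fin (m + m') → Bool) :
    tens A B j i = A (fun k => j (Fin.castAdd n' k)) (fun k => i (Fin.castAdd m' k)) *
      B (fun k => j (Fin.natAdd n k)) (fun k => i (Fin.natAdd m k)) := rfl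

def ket (b : Bool) : QMap 0 1 := fun j _ => if j 0 = b then 1 else 0

theorem castQ_tens_ket_one_apply {m : ℕ} (hm : 0 + m = m) (hn : 1 + m = m + 1) (b : Bool)
    (x : Fin (m + 1) → Bool) (i : Fin m → Bool) :
    castQ hm hn (tens (ket b) (1 : QMap m m)) x i = if x = Fin.cons b i then 1 else 0 := by
  have head : x (Fin.cast hn (Fin.castAdd m 0)) = x 0 := congrArg x (Fin.ext rfl)
  have tail : (fun k => x (Fin.cast hn (Fin.natAdd 1 k))) = Fin.tail x :=
    funext fun k => congrArg x (Fin.ext (Nat.add_comm 1 k))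
  have input : (fun k => i (Fin.cast hm (Fin.natAdd 0 k))) = i :=
    funext fun k => congrArg i (Fin.ext (Nat.zero_add k))
  have eq_cons_iff : x = Fin.cons b i ↔ x 0 = b ∧ Fin.tail x = i := by
    conv_lhs => rw [← Fin.cons_self_tail x]
    exact Fin.cons_inj
  rw [castQ_apply, tens_apply, tail, input]
  simp only [ket, head, Matrix.one_apply, eq_cons_iff, ite_and, ite_mul, one_mul, zero_mul]

theorem mul_castQ_tens_ket_one_apply {m n : ℕ} (hm : 0 + m = m) (hn : 1 + m = m + 1)
    (b : Bool) (M : QMap (m + 1) n) (j : Fin n → Bool) (i : Fin m → Bool) :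
    (M * castQ hm hn (tens (ket b) (1 : QMap m m))) j i = M j (Fin.cons b i) := by
  simp [Matrix.mul_apply, castQ_tens_ket_one_apply]

theorem Hbox_apply_cons_true {m n : ℕ} (j : Fin n → Bool) (i : Fin m → Bool) :
    Hbox (m + 1) n j (Fin.cons true i) = Hbox m n j i := by
  simp [Hbox, Fin.forall_fin_succ]

theorem Hbox_apply_cons_false {m n : ℕ} (j : Fin n → Bool) (i : Fin m → Bool) :
    Hbox (m + 1) n j (Fin.cons false i) = 1 := by
  simp [Hbox, Fin.forall_fin_succ]

/-- an H-box absorbs a `|1⟩` input, and becomes the all-ones matrix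
on a `|0⟩` input (state-copy rules for H-boxes). -/
theorem zh_hbox_state (m n : ℕ) :
    Hbox (m + 1) n *
        castQ (by omega : 0 + m = m) (by omega : 1 + m = m + 1)
          (tens ket1 (1 : QMap m m)) = Hbox m n ∧
    Hbox (m + 1) n *
        castQ (by omega : 0 + m = m) (by omega : 1 + m = m + 1)
          (tens ket0 (1 : QMap m m)) = (fun _ _ => 1 : QMap m n) := by
  constructor
  · ext j i
    rw [show ket1 = ket true from rfl, mul_castQ_tens_ket_one_apply, Hbox_apply_cons_true]
  · ext j i
    rw [show ket0 = ket false from rfl, mul_castQ_tens_ket_one_apply, Hbox_apply_cons_false]
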